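/- arXiv:1704.00102 — 3 statements merged into one kernel-verified Lean document; each statement's English description precedes it below -/
import Mathlib

section
/- For symmetric positive definite n×n real matrices X and Y, tr((X^{1/2} Y X^{1/2})^{1/2}) ≤ √(tr(X) · tr(Y)). -/
open Matrix
open scoped MatrixOrder Matrix.Norms.L2Operator

/-!
With `A = X^{1/2}` and `S = (A Y A)^{1/2}`, the matrix `B = A⁻¹ S` satisfies `A B = S` and
`B Bᵀ = A⁻¹ S² A⁻¹ = Y`. Cauchy–Schwarz for the Frobenius inner product then gives
`tr(S)² = tr(A B)² ≤ tr(A Aᵀ) · tr(B Bᵀ) = tr(X) · tr(Y)`.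
-/

namespace Matrix

variable {m R : Type*} [Fintype m]

theorem trace_mul_sq_le [CommRing R] [LinearOrder R] [IsStrictOrderedRing R] (A B : Matrix m m R) :
    (A * B).trace ^ 2 ≤ (A * Aᵀ).trace * (B * Bᵀ).trace := by
  simp only [trace, diag, mul_apply, transpose_apply, ← sq, ← Fintype.sum_prod_type']
  rw [← (Equiv.prodComm m m).sum_comp (fun p => B p.1 p.2 ^ 2)]
  exact Finset.sum_mul_sq_le_sq_mul_sq _ _ _

variable [DecidableEq m]

theorem mul_transpose_eq_of_mul_self_eq {A S Y : Matrix m m ℝ} (hA : IsUnit A) (hAt : Aᵀ = A)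
    (hSt : Sᵀ = S) (hS : S * S = A * Y * A) : A⁻¹ * S * (A⁻¹ * S)ᵀ = Y := by
  have hdet := (isUnit_iff_isUnit_det A).mp hA
  rw [transpose_mul, hSt, transpose_nonsing_inv, hAt]
  calc A⁻¹ * S * (S * A⁻¹) = A⁻¹ * (S * S) * A⁻¹ := by simp only [mul_assoc]
    _ = (A⁻¹ * A) * Y * (A * A⁻¹) := by rw [hS]; simp only [mul_assoc]
    _ = Y := by rw [nonsing_inv_mul A hdet, mul_nonsing_inv A hdet, one_mul, mul_one]

theorem trace_sq_le_of_mul_self_eq {A S Y : Matrix m m ℝ} (hA : IsUnit A) (hAt : Aᵀ = A)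
    (hSt : Sᵀ = S) (hS : S * S = A * Y * A) : S.trace ^ 2 ≤ (A * A).trace * Y.trace := by
  have h := trace_mul_sq_le A (A⁻¹ * S)
  rwa [← mul_assoc, mul_nonsing_inv A ((isUnit_iff_isUnit_det A).mp hA), one_mul, hAt,
    mul_transpose_eq_of_mul_self_eq hA hAt hSt hS] at h

theorem transpose_sqrt (A : Matrix m m ℝ) : (CFC.sqrt A)ᵀ = CFC.sqrt A := by
  simpa [← conjTranspose_eq_transpose_of_trivial] using
    (nonneg_iff_posSemidef.mp (CFC.sqrt_nonneg A)).isHermitian.eq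

end Matrix

theorem stmt0_general {n : ℕ} (X Y : Matrix (Fin n) (Fin n) ℝ)
    (hX : X.PosDef)
    (hXYX : (CFC.sqrt X * Y * CFC.sqrt X).PosSemidef) :
    (CFC.sqrt (CFC.sqrt X * Y * CFC.sqrt X)).trace ≤ Real.sqrt (X.trace * Y.trace) := by
  have hsq := trace_sq_le_of_mul_self_eq ((CFC.isUnit_sqrt_iff X).mpr hX.isUnit)
    (transpose_sqrt X) (transpose_sqrt _) (CFC.sqrt_mul_sqrt_self _ hXYX.nonneg)
  rw [CFC.sqrt_mul_sqrt_self X hX.posSemidef.nonneg] at hsq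
  exact (le_abs_self _).trans (Real.abs_le_sqrt hsq)

/-- For symmetric positive definite `X, Y`, `tr((X^{1/2} Y X^{1/2})^{1/2}) ≤ √(tr X · tr Y)`. -/
theorem stmt0 {n : ℕ} (X Y : Matrix (Fin n) (Fin n) ℝ)
    (hX : X.PosDef) (hY : Y.PosDef)
    (hXYX : (CFC.sqrt X * Y * CFC.sqrt X).PosSemidef) :
    (CFC.sqrt (CFC.sqrt X * Y * CFC.sqrt X)).trace ≤ Real.sqrt (X.trace * Y.trace) :=
  stmt0_general X Y hX hXYX
end

section
/- For symmetric positive definite matrices X, Y and any symmetric positive definite matrix G, tr((X^{1/2} Y X^{1/2})^{1/2}) ≤ √(tr(XG) · tr(YG^{-1})). -/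
/-! Put `A = X^{1/2}`, `S = Y^{1/2}` and `Z = (A Y A)^{1/2}`. Since `Z² = (SA)ᵀ(SA)` with `Z`
invertible, `SA = UZ` for an orthogonal `U`, so `tr Z = tr(Uᵀ S A)`. Cauchy–Schwarz for the inner
product `⟪x, y⟫ = tr(y G⁻¹ xᵀ)` applied to `x = AG`, `y = UᵀS` bounds `(tr Z)²` by
`tr(AGA) · tr(Uᵀ S G⁻¹ S U) = tr(XG) · tr(YG⁻¹)`. -/

open Matrix

open scoped ComplexOrder in
/-- The positive semidefinite square root of a positive semidefinite matrix
(the definition `Matrix.PosSemidef.sqrt` of the older Mathlib, since removed). -/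
noncomputable def Matrix.PosSemidef.sqrt {n 𝕜 : Type*} [Fintype n] [RCLike 𝕜] [DecidableEq n]
    {A : Matrix n n 𝕜} (hA : A.PosSemidef) : Matrix n n 𝕜 :=
  hA.1.eigenvectorUnitary.1 * diagonal ((↑) ∘ (√·) ∘ hA.1.eigenvalues) *
  (star hA.1.eigenvectorUnitary : Matrix n n 𝕜)

namespace Matrix.PosSemidef

open scoped ComplexOrder MatrixOrder

variable {n 𝕜 : Type*} [Fintype n] [RCLike 𝕜] [DecidableEq n] {A : Matrix n n 𝕜}

lemma sqrt_eq_cfc (hA : A.PosSemidef) : hA.sqrt = cfc Real.sqrt A := by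
  rw [hA.1.cfc_eq, IsHermitian.cfc, Unitary.conjStarAlgAut_apply]
  rfl

lemma sqrt_mul_self (hA : A.PosSemidef) : hA.sqrt * hA.sqrt = A := by
  rw [sqrt_eq_cfc, ← cfc_mul ..]
  conv_rhs => rw [← cfc_id' ℝ A]
  exact cfc_congr fun x hx => Real.mul_self_sqrt (spectrum_nonneg_of_nonneg hA.nonneg hx)

lemma posSemidef_sqrt (hA : A.PosSemidef) : hA.sqrt.PosSemidef := by
  rw [sqrt_eq_cfc, ← nonneg_iff_posSemidef]
  exact cfc_nonneg fun x _ => Real.sqrt_nonneg x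

lemma isHermitian_sqrt (hA : A.PosSemidef) : hA.sqrt.IsHermitian :=
  hA.posSemidef_sqrt.isHermitian

lemma isUnit_sqrt (hA : A.PosSemidef) (hAu : IsUnit A) : IsUnit hA.sqrt :=
  isUnit_of_mul_isUnit_left (hA.sqrt_mul_self ▸ hAu)

end Matrix.PosSemidef

namespace Matrix

lemma trace_mul_mul_conjTranspose_sq_le {n : Type*} [Fintype n] {M : Matrix n n ℝ}
    (hM : M.PosSemidef) (x y : Matrix n n ℝ) :
    (y * M * xᴴ).trace ^ 2 ≤ (x * M * xᴴ).trace * (y * M * yᴴ).trace := by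
  let _ := M.toMatrixSeminormedAddCommGroup hM
  let _ := M.toMatrixInnerProductSpace hM
  exact (sq _).trans_le (real_inner_mul_inner_self_le x y)

variable {n 𝕜 : Type*} [Fintype n] [DecidableEq n] [RCLike 𝕜]

lemma exists_mem_unitaryGroup_eq_mul {M Z : Matrix n n 𝕜} (hZ : Z.IsHermitian) (hZu : IsUnit Z)
    (hMZ : Mᴴ * M = Z * Z) : ∃ U ∈ unitaryGroup n 𝕜, M = U * Z := by
  have hdet : IsUnit Z.det := (isUnit_iff_isUnit_det Z).mp hZu
  refine ⟨M * Z⁻¹, ?_, by rw [Matrix.mul_assoc, nonsing_inv_mul _ hdet, Matrix.mul_one]⟩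
  rw [mem_unitaryGroup_iff', star_eq_conjTranspose, conjTranspose_mul, conjTranspose_nonsing_inv,
    hZ.eq, Matrix.mul_assoc, ← Matrix.mul_assoc Mᴴ, hMZ, ← Matrix.mul_assoc, ← Matrix.mul_assoc,
    nonsing_inv_mul _ hdet, Matrix.one_mul, mul_nonsing_inv _ hdet]

lemma trace_conjTranspose_mul_sq_le {U S A G : Matrix n n ℝ} (hU : U ∈ unitaryGroup n ℝ)
    (hS : S.IsHermitian) (hA : A.IsHermitian) (hG : G.PosDef) :
    (Uᴴ * (S * A)).trace ^ 2 ≤ (A * A * G).trace * (S * S * G⁻¹).trace := by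
  have hdet : IsUnit G.det := (isUnit_iff_isUnit_det G).mp hG.isUnit
  have hUU : U * Uᴴ = 1 := mem_unitaryGroup_iff.mp hU
  have hCS := trace_mul_mul_conjTranspose_sq_le hG.inv.posSemidef (A * G) (Uᴴ * S)
  simp only [conjTranspose_mul, hA.eq, hS.eq, hG.isHermitian.eq, conjTranspose_conjTranspose]
    at hCS
  calc (Uᴴ * (S * A)).trace ^ 2 = (Uᴴ * S * G⁻¹ * (G * A)).trace ^ 2 := by
        rw [Matrix.mul_assoc _ G⁻¹, ← Matrix.mul_assoc G⁻¹, nonsing_inv_mul G hdet,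
          Matrix.one_mul, Matrix.mul_assoc]
    _ ≤ (A * G * G⁻¹ * (G * A)).trace * (Uᴴ * S * G⁻¹ * (S * U)).trace := hCS
    _ = (A * A * G).trace * (S * S * G⁻¹).trace := by
      congr 1
      · rw [Matrix.mul_assoc A G, mul_nonsing_inv G hdet, Matrix.mul_one, trace_mul_comm,
          Matrix.mul_assoc, trace_mul_comm]
      · rw [trace_mul_comm, Matrix.mul_assoc S U, ← Matrix.mul_assoc U, ← Matrix.mul_assoc U, hUU,
          Matrix.one_mul, Matrix.mul_assoc]

end Matrix

/-- Uhlmann's variational inequality: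
`tr((X^{1/2} Y X^{1/2})^{1/2}) ≤ √(tr(XG) · tr(YG⁻¹))` for SPD `X, Y, G`. -/
theorem stmt1 {n : ℕ} (X Y G : Matrix (Fin n) (Fin n) ℝ)
    (hX : X.PosDef) (hY : Y.PosDef) (hG : G.PosDef)
    (hXYX : (hX.posSemidef.sqrt * Y * hX.posSemidef.sqrt).PosSemidef) :
    hXYX.sqrt.trace ≤ Real.sqrt ((X * G).trace * (Y * G⁻¹).trace) := by
  set A := hX.posSemidef.sqrt
  set S := hY.posSemidef.sqrt
  have hA : A.IsHermitian := hX.posSemidef.isHermitian_sqrt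
  have hS : S.IsHermitian := hY.posSemidef.isHermitian_sqrt
  have hZZ : (S * A)ᴴ * (S * A) = hXYX.sqrt * hXYX.sqrt := by
    rw [hXYX.sqrt_mul_self, conjTranspose_mul, hA.eq, hS.eq, ← hY.posSemidef.sqrt_mul_self]
    noncomm_ring
  have hAu : IsUnit A := hX.posSemidef.isUnit_sqrt hX.isUnit
  obtain ⟨U, hU, hpolar⟩ := exists_mem_unitaryGroup_eq_mul hXYX.isHermitian_sqrt
    (hXYX.isUnit_sqrt ((hAu.mul hY.isUnit).mul hAu)) hZZ
  have htrace : hXYX.sqrt.trace = (Uᴴ * (S * A)).trace := by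
    rw [hpolar, ← Matrix.mul_assoc, ← star_eq_conjTranspose, mem_unitaryGroup_iff'.mp hU,
      Matrix.one_mul]
  have hCS := trace_conjTranspose_mul_sq_le hU hS hA hG
  rw [← htrace, hX.posSemidef.sqrt_mul_self, hY.posSemidef.sqrt_mul_self] at hCS
  exact Real.le_sqrt_of_sq_le hCS
end

section
/- For symmetric positive definite matrices P and P₀, the matrix derivative ∂/∂P tr((P₀^{1/2} P P₀^{1/2})^{1/2}) equals (1/2) P₀^{1/2}(P₀^{−1/2} P⁻¹ P₀^{−1/2})^{1/2} P₀^{1/2}. -/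
open Matrix Classical

/-- Total version of the positive semidefinite matrix square root. -/
noncomputable def msqrt {n : ℕ} (A : Matrix (Fin n) (Fin n) ℝ) : Matrix (Fin n) (Fin n) ℝ :=
  if h : A.PosSemidef then
    (h.1.eigenvectorUnitary : Matrix (Fin n) (Fin n) ℝ) *
      diagonal ((↑) ∘ (fun i => Real.sqrt (h.1.eigenvalues i))) *
      (star h.1.eigenvectorUnitary : Matrix (Fin n) (Fin n) ℝ)
  else 0

/-!
Write `Q = P₀^{1/2}`, `M = QPQ` and `S₀ = M^{1/2}`. Squaring has derivative `X ↦ S₀X + XS₀` at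
`S₀`, which is injective (on its kernel the two nonnegative traces `tr(XᴴS₀X)` and `tr(XS₀Xᴴ)`
add up to `0`), so by the inverse function theorem squaring has a differentiable local inverse
near `M`. On Hermitian matrices this inverse is the square root: its values are Hermitian by
local uniqueness and positive definite by upper semicontinuity of the spectrum. Hence the
derivative of `t ↦ (M + tQHQ)^{1/2}` is the solution `X` of `S₀X + XS₀ = QHQ`, and multiplying
by `S₀⁻¹` and taking traces gives `tr X = ½ tr(S₀⁻¹QHQ)`, with `S₀⁻¹ = (Q⁻¹P⁻¹Q⁻¹)^{1/2}`.
-/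

open scoped MatrixOrder ComplexOrder
open Filter Topology

theorem msqrt_eq_cfcSqrt {n : ℕ} (A : Matrix (Fin n) (Fin n) ℝ) : msqrt A = CFC.sqrt A := by
  by_cases h : A.PosSemidef
  · rw [msqrt, dif_pos h, CFC.sqrt_eq_cfc, cfc_nnreal_eq_real _ A, h.1.cfc_eq, IsHermitian.cfc,
      Unitary.conjStarAlgAut_apply]
    congr 3
    funext i
    simp only [Function.comp_apply, RCLike.ofReal_real_eq_id, id, Real.coe_sqrt,
      Real.coe_toNNReal _ (h.eigenvalues_nonneg i)]
  · rw [msqrt, dif_neg h, CFC.sqrt_of_not_nonneg (by rwa [nonneg_iff_posSemidef])]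

namespace Matrix

variable {ι 𝕜 : Type*} [Fintype ι] [DecidableEq ι] [RCLike 𝕜]

theorem PosDef.cfcSqrt {A : Matrix ι ι 𝕜} (hA : A.PosDef) : (CFC.sqrt A).PosDef :=
  hA.isStrictlyPositive.sqrt.posDef

theorem two_mul_trace_eq_trace_inv_mul {R : Type*} [CommRing R] {S X K : Matrix ι ι R}
    (hS : IsUnit S.det) (h : S * X + X * S = K) : 2 * X.trace = (S⁻¹ * K).trace := by
  rw [← h, Matrix.mul_add, trace_add, ← Matrix.mul_assoc, nonsing_inv_mul _ hS, Matrix.one_mul,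
    trace_mul_comm, Matrix.mul_assoc, mul_nonsing_inv _ hS, Matrix.mul_one, two_mul]

theorem PosDef.eq_zero_of_mul_add_mul_eq_zero {S X : Matrix ι ι 𝕜} (hS : S.PosDef)
    (h : S * X + X * S = 0) : X = 0 := by
  have hsum : (Xᴴ * S * X).trace + (X * S * Xᴴ).trace = 0 := by
    have hcycle : (Xᴴ * X * S).trace = (X * S * Xᴴ).trace := by
      rw [Matrix.mul_assoc, trace_mul_comm]
    simpa only [Matrix.mul_add, trace_add, Matrix.mul_zero, trace_zero, ← Matrix.mul_assoc,
      hcycle] using congrArg (fun M => (Xᴴ * M).trace) h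
  have hconj : Xᴴ * S * X = 0 :=
    (hS.posSemidef.conjTranspose_mul_mul_same X).trace_eq_zero_iff.mp <|
      (add_eq_zero_iff_of_nonneg (hS.posSemidef.conjTranspose_mul_mul_same X).trace_nonneg
        (hS.posSemidef.mul_mul_conjTranspose_same X).trace_nonneg).mp hsum |>.1
  set R := CFC.sqrt S
  have hR : R.PosDef := hS.cfcSqrt
  have hRX : R * X = 0 := by
    rw [← conjTranspose_mul_self_eq_zero, conjTranspose_mul, hR.1.eq, Matrix.mul_assoc,
      ← Matrix.mul_assoc R, CFC.sqrt_mul_sqrt_self S hS.posSemidef.nonneg, ← Matrix.mul_assoc,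
      hconj]
  exact hR.isUnit.mul_right_eq_zero.mp hRX

section

-- Any norm would do: it only serves to differentiate matrix-valued functions.
attribute [local instance] Matrix.linftyOpNormedRing Matrix.linftyOpNormedAlgebra

theorem PosDef.eventually_posDef {α : Type*} {l : Filter α} {A : Matrix ι ι 𝕜} (hA : A.PosDef)
    {B : α → Matrix ι ι 𝕜} (hB : Tendsto B l (𝓝 A)) (hBh : ∀ᶠ a in l, (B a).IsHermitian) :
    ∀ᶠ a in l, (B a).PosDef := by
  have hspec : Set.Ioi 0 ∈ 𝓝ˢ (spectrum ℝ A) :=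
    isOpen_Ioi.mem_nhdsSet.mpr fun _ hx => hA.isStrictlyPositive.spectrum_pos hx
  have hU := (upperHemicontinuous_spectrum ℝ (Matrix ι ι 𝕜)).upperHemicontinuousAt A _ hspec
  filter_upwards [hB.eventually hU, hBh] with a ha hh
  exact hh.posDef_iff_eigenvalues_pos.mpr fun i =>
    subset_of_mem_nhdsSet ha (hh.eigenvalues_mem_spectrum_real i)

theorem PosDef.localInverse_mul_self_eventuallyEq_sqrt {S₀ : Matrix ι ι 𝕜} (hS₀ : S₀.PosDef)
    {f' : Matrix ι ι 𝕜 ≃L[ℝ] Matrix ι ι 𝕜}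
    (hf : HasStrictFDerivAt (fun S : Matrix ι ι 𝕜 => S * S) (f' : Matrix ι ι 𝕜 →L[ℝ] _) S₀) :
    hf.localInverse _ _ _ =ᶠ[𝓝[{M | M.IsHermitian}] (S₀ * S₀)] CFC.sqrt := by
  set φ := hf.localInverse _ _ _
  have hφ : Tendsto φ (𝓝[{M | M.IsHermitian}] (S₀ * S₀)) (𝓝 S₀) := by
    have := hf.localInverse_continuousAt.tendsto
    rw [hf.localInverse_apply_image] at this
    exact this.mono_left nhdsWithin_le_nhds
  have hright : ∀ᶠ M in 𝓝[{M | M.IsHermitian}] (S₀ * S₀), φ M * φ M = M :=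
    nhdsWithin_le_nhds hf.eventually_right_inverse
  have hφh : Tendsto (fun M => (φ M)ᴴ) (𝓝[{M | M.IsHermitian}] (S₀ * S₀)) (𝓝 S₀) := by
    have := (continuous_id.matrix_conjTranspose.tendsto S₀).comp hφ
    rwa [id, hS₀.1.eq] at this
  -- `(φ M)ᴴ` is another square root of `M` close to `S₀`, so it is `φ M` by local injectivity.
  have hherm : ∀ᶠ M in 𝓝[{M | M.IsHermitian}] (S₀ * S₀), (φ M).IsHermitian := by
    filter_upwards [self_mem_nhdsWithin, hright, hφh.eventually hf.eventually_left_inverse]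
      with M hM hMφ hleft
    rw [← conjTranspose_mul, hMφ, hM.eq] at hleft
    exact hleft.symm
  filter_upwards [hS₀.eventually_posDef hφ hherm, hright] with M hpos hsq
  exact (CFC.sqrt_unique hsq hpos.posSemidef.nonneg).symm

theorem PosDef.exists_hasDerivAt_cfcSqrt_comp {m : ℝ → Matrix ι ι 𝕜} {K : Matrix ι ι 𝕜} {t₀ : ℝ}
    (hm : HasDerivAt m K t₀) (hherm : ∀ᶠ t in 𝓝 t₀, (m t).IsHermitian) (hpos : (m t₀).PosDef) :
    ∃ X, CFC.sqrt (m t₀) * X + X * CFC.sqrt (m t₀) = K ∧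
      HasDerivAt (fun t => CFC.sqrt (m t)) X t₀ := by
  set S₀ := CFC.sqrt (m t₀)
  have hS₀ : S₀.PosDef := hpos.cfcSqrt
  have hsq : S₀ * S₀ = m t₀ := CFC.sqrt_mul_sqrt_self _ hpos.posSemidef.nonneg
  have hinj : Function.Injective (LinearMap.mulLeft ℝ S₀ + LinearMap.mulRight ℝ S₀) :=
    (injective_iff_map_eq_zero _).mpr fun X hX => hS₀.eq_zero_of_mul_add_mul_eq_zero hX
  let E := (LinearEquiv.ofInjectiveEndo _ hinj).toContinuousLinearEquiv
  have hE : ∀ X, E X = S₀ * X + X * S₀ := fun _ => rfl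
  have hf : HasStrictFDerivAt (fun S : Matrix ι ι 𝕜 => S * S) (E : Matrix ι ι 𝕜 →L[ℝ] _) S₀ := by
    refine ((hasStrictFDerivAt_id S₀).mul' (hasStrictFDerivAt_id S₀)).congr_fderiv ?_
    ext1 X
    exact (hE X).symm
  refine ⟨E.symm K, by rw [← hE, E.apply_symm_apply], ?_⟩
  have hmH : Tendsto m (𝓝 t₀) (𝓝[{M | M.IsHermitian}] (S₀ * S₀)) :=
    tendsto_nhdsWithin_iff.mpr ⟨hsq ▸ hm.continuousAt.tendsto, hherm⟩
  have hφ := hf.to_localInverse.hasFDerivAt.comp_hasDerivAt_of_eq t₀ hm hsq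
  exact hφ.congr_of_eventuallyEq
    (EventuallyEq.symm (hmH.eventually (hS₀.localInverse_mul_self_eventuallyEq_sqrt hf)))

theorem PosDef.hasDerivAt_trace_cfcSqrt_add_smul {A K : Matrix ι ι 𝕜} (hA : A.PosDef)
    (hK : K.IsHermitian) :
    HasDerivAt (fun t : ℝ => (CFC.sqrt (A + t • K)).trace)
      (2⁻¹ * ((CFC.sqrt A)⁻¹ * K).trace) 0 := by
  have hline : HasDerivAt (fun t : ℝ => A + t • K) K 0 := by
    have := ((hasDerivAt_id (0 : ℝ)).smul_const K).const_add A
    rwa [one_smul] at this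
  have hherm : ∀ t : ℝ, (A + t • K).IsHermitian := fun t =>
    hA.1.add (hK.smul (IsSelfAdjoint.all t))
  obtain ⟨X, hX, hd⟩ := exists_hasDerivAt_cfcSqrt_comp hline (.of_forall hherm)
    (by simpa using hA)
  simp only [zero_smul, add_zero] at hX
  have htrace := (traceLinearMap ι ℝ 𝕜).toContinuousLinearMap.hasFDerivAt.comp_hasDerivAt 0 hd
  rw [← two_mul_trace_eq_trace_inv_mul ((isUnit_iff_isUnit_det _).mp hA.cfcSqrt.isUnit) hX,
    ← mul_assoc, inv_mul_cancel₀ two_ne_zero, one_mul]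
  exact htrace

end

end Matrix

/-- The gradient of `P ↦ tr((P₀^{1/2} P P₀^{1/2})^{1/2})` on SPD matrices is
`(1/2) P₀^{1/2}(P₀^{−1/2} P⁻¹ P₀^{−1/2})^{1/2} P₀^{1/2}`: the Fréchet (directional)
derivative at `P` in any symmetric direction `H` equals `tr(D H)` for this `D`. -/
theorem stmt12 {n : ℕ} (P P₀ : Matrix (Fin n) (Fin n) ℝ)
    (hP : P.PosDef) (hP₀ : P₀.PosDef) :
    ∀ H : Matrix (Fin n) (Fin n) ℝ, H.IsSymm →
      HasDerivAt (fun t : ℝ => (msqrt (msqrt P₀ * (P + t • H) * msqrt P₀)).trace)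
        ((((1 / 2 : ℝ) •
            (msqrt P₀ * msqrt ((msqrt P₀)⁻¹ * P⁻¹ * (msqrt P₀)⁻¹) * msqrt P₀)) * H).trace)
        0 := by
  intro H hH
  simp only [msqrt_eq_cfcSqrt]
  set Q := CFC.sqrt P₀
  have hQ : Q.PosDef := hP₀.cfcSqrt
  have hM : (Q * P * Q).PosDef := by
    simpa only [hQ.1.eq] using
      hP.conjTranspose_mul_mul_same (mulVec_injective_iff_isUnit.mpr hQ.isUnit)
  have hK : (Q * H * Q).IsHermitian := by
    simpa only [hQ.1.eq] using isHermitian_conjTranspose_mul_mul Q (isHermitian_iff_isSymm.mpr hH)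
  have hline : ∀ t : ℝ, Q * (P + t • H) * Q = Q * P * Q + t • (Q * H * Q) := fun t => by
    rw [Matrix.mul_add, Matrix.add_mul, Matrix.mul_smul, Matrix.smul_mul]
  have hvalue : ((1 / 2 : ℝ) • (Q * CFC.sqrt (Q⁻¹ * P⁻¹ * Q⁻¹) * Q) * H).trace
      = 2⁻¹ * ((CFC.sqrt (Q * P * Q))⁻¹ * (Q * H * Q)).trace := by
    rw [hM.posSemidef.inv_sqrt, Matrix.mul_inv_rev, Matrix.mul_inv_rev, ← Matrix.mul_assoc,
      Matrix.smul_mul, trace_smul, one_div, smul_eq_mul]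
    simp only [Matrix.mul_assoc]
    rw [trace_mul_comm]
    simp only [Matrix.mul_assoc]
  simp only [hline, hvalue]
  exact hM.hasDerivAt_trace_cfcSqrt_add_smul hK
end
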